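/- arXiv:1302.1407 — 5 statements merged into one kernel-verified Lean document; each statement's English description precedes it below -/
import Mathlib

section
/- Let Λ₁, …, Λ_s be full-rank sublattices of a full-rank lattice Λ ⊂ ℝⁿ, and let Λ̄ = ⋂_{i=1}^{s} Λ_i. Then max_{1≤i≤s} det Λ_i ≤ det Λ̄ ≤ (det Λ)^{1−s} · det Λ₁ ⋯ det Λ_s. -/
/-!
The covolume of a sublattice `Λ' ⊆ Λ` is `[Λ : Λ'] · det Λ`. The lower bound is then
`[Λᵢ : Λ̄] ≥ 1`, and the upper bound is `[Λ : ⋂ Λᵢ] ≤ ∏ [Λ : Λᵢ]`, which holds because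
`Λ / ⋂ Λᵢ` embeds into `∏ Λ / Λᵢ`.
-/

open MeasureTheory Set Pointwise

/-- The lattice generated by the vectors `b`. -/
noncomputable def lat {n : ℕ} (b : Fin n → (Fin n → ℝ)) : Set (Fin n → ℝ) :=
  (Submodule.span ℤ (Set.range b) : Submodule ℤ (Fin n → ℝ))

/-- The determinant (covolume) of the lattice with basis `b`. -/
noncomputable def latDet {n : ℕ} (b : Fin n → (Fin n → ℝ)) : ℝ :=
  |(Matrix.of b).det|

/-- A compact convex `o`-symmetric body with nonempty interior. -/
def IsBody {n : ℕ} (K : Set (Fin n → ℝ)) : Prop :=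
  IsCompact K ∧ Convex ℝ K ∧ K = -K ∧ (interior K).Nonempty

/-- First successive minimum of `K` w.r.t. the point set `S`. -/
noncomputable def lambda1 {n : ℕ} (K S : Set (Fin n → ℝ)) : ℝ :=
  sInf {l : ℝ | 0 ≤ l ∧ ∃ x ∈ S, x ≠ 0 ∧ x ∈ l • K}

/-- First restricted successive minimum: smallest `l ≥ 0` with `l • K ∩ S ≠ ∅`. -/
noncomputable def lambdaRes {n : ℕ} (K S : Set (Fin n → ℝ)) : ℝ :=
  sInf {l : ℝ | 0 ≤ l ∧ (l • K ∩ S).Nonempty}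

/-- `i`-th successive minimum of `K` w.r.t. the point set `S`. -/
noncomputable def lambdaI {n : ℕ} (i : ℕ) (K S : Set (Fin n → ℝ)) : ℝ :=
  sInf {l : ℝ | 0 ≤ l ∧ i ≤ Module.finrank ℝ (Submodule.span ℝ (l • K ∩ S))}

/-- The (half-open) fundamental parallelepiped of the basis `b`. -/
noncomputable def fundPar {n : ℕ} (b : Fin n → (Fin n → ℝ)) : Set (Fin n → ℝ) :=
  {x | ∃ ρ : Fin n → ℝ, (∀ i, 0 ≤ ρ i ∧ ρ i < 1) ∧ x = ∑ i, ρ i • b i}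

/-- The covering radius of `K` with respect to the point set `L`. -/
noncomputable def covRadius {n : ℕ} (K L : Set (Fin n → ℝ)) : ℝ :=
  sInf {μ : ℝ | 0 < μ ∧ ∀ t : Fin n → ℝ, (({t} + μ • K) ∩ L).Nonempty}

open Submodule

namespace ZLattice

variable {ι : Type*} [Fintype ι]

theorem covolume_span_eq_abs_det [DecidableEq ι] (B : Module.Basis ι ℝ (ι → ℝ)) :
    covolume (span ℤ (range B)) = |(Matrix.of B).det| := by
  rw [covolume_eq_det _ (B.restrictScalars ℤ)]
  congr 2
  ext i
  simp

variable (L₁ L₂ : Submodule ℤ (ι → ℝ)) [DiscreteTopology L₁] [IsZLattice ℝ L₁]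
  [DiscreteTopology L₂] [IsZLattice ℝ L₂]

theorem covolume_eq_relIndex_mul (h : L₁ ≤ L₂) :
    covolume L₁ = L₁.toAddSubgroup.relIndex L₂.toAddSubgroup * covolume L₂ := by
  rw [← covolume_div_covolume_eq_relIndex L₁ L₂ h]
  exact (div_mul_cancel₀ _ (covolume_pos L₂).ne').symm

theorem covolume_le_covolume_of_le (h : L₁ ≤ L₂) : covolume L₂ ≤ covolume L₁ := by
  have hpos : (0 : ℝ) < L₁.toAddSubgroup.relIndex L₂.toAddSubgroup := by
    rw [← covolume_div_covolume_eq_relIndex L₁ L₂ h]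
    exact div_pos (covolume_pos L₁) (covolume_pos L₂)
  rw [covolume_eq_relIndex_mul L₁ L₂ h]
  exact le_mul_of_one_le_left (covolume_pos L₂).le (by exact_mod_cast hpos)

theorem covolume_iInf_le {κ : Type*} [Fintype κ] (L : Submodule ℤ (ι → ℝ))
    [DiscreteTopology L] [IsZLattice ℝ L] (M : Submodule ℤ (ι → ℝ)) [DiscreteTopology M]
    [IsZLattice ℝ M] (Ls : κ → Submodule ℤ (ι → ℝ)) [∀ i, DiscreteTopology (Ls i)]
    [∀ i, IsZLattice ℝ (Ls i)] (hM : M = ⨅ i, Ls i) (hLs : ∀ i, Ls i ≤ L) :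
    covolume M ≤ covolume L ^ (1 - (Fintype.card κ : ℤ)) * ∏ i, covolume (Ls i) := by
  rcases isEmpty_or_nonempty κ with hκ | ⟨⟨i₀⟩⟩
  -- the empty intersection is `⊤ ⊇ L`
  · simpa [hM] using covolume_le_covolume_of_le L M (by simp [hM])
  have hML : M ≤ L := hM ▸ (iInf_le Ls i₀).trans (hLs i₀)
  have hidx : M.toAddSubgroup.relIndex L.toAddSubgroup ≤
      ∏ i, (Ls i).toAddSubgroup.relIndex L.toAddSubgroup := by
    have hinf : (⨅ i, Ls i).toAddSubgroup = ⨅ i, (Ls i).toAddSubgroup := by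
      ext
      simp [Submodule.mem_iInf, AddSubgroup.mem_iInf]
    rw [hM, hinf]
    exact AddSubgroup.relIndex_iInf_le _
  have hL := (covolume_pos L).ne'
  calc covolume M = M.toAddSubgroup.relIndex L.toAddSubgroup * covolume L :=
        covolume_eq_relIndex_mul M L hML
    _ ≤ (∏ i, ((Ls i).toAddSubgroup.relIndex L.toAddSubgroup : ℝ)) * covolume L := by
        refine mul_le_mul_of_nonneg_right ?_ (covolume_pos L).le
        exact_mod_cast hidx
    _ = (∏ i, (covolume (Ls i) / covolume L)) * covolume L := by
        simp_rw [covolume_div_covolume_eq_relIndex _ L (hLs _)]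
    _ = covolume L ^ (1 - (Fintype.card κ : ℤ)) * ∏ i, covolume (Ls i) := by
        rw [Finset.prod_div_distrib, Finset.prod_const, Finset.card_univ, zpow_sub₀ hL,
          zpow_one, zpow_natCast]
        field_simp

end ZLattice

section LatticeBasis

variable {n : ℕ} {b : Fin n → Fin n → ℝ}

noncomputable def latBasis (hb : LinearIndependent ℝ b) : Module.Basis (Fin n) ℝ (Fin n → ℝ) :=
  basisOfLinearIndependentOfCardEqFinrank' b hb (by simp)

@[simp]
theorem coe_latBasis (hb : LinearIndependent ℝ b) : ⇑(latBasis hb) = b :=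
  coe_basisOfLinearIndependentOfCardEqFinrank' b hb _

theorem lat_eq_span_latBasis (hb : LinearIndependent ℝ b) :
    lat b = span ℤ (range (latBasis hb)) := by
  rw [coe_latBasis, lat]

theorem latDet_eq_covolume (hb : LinearIndependent ℝ b) :
    latDet b = ZLattice.covolume (span ℤ (range (latBasis hb))) := by
  rw [ZLattice.covolume_span_eq_abs_det, coe_latBasis, latDet]

end LatticeBasis

/-- bounds on the determinant of the intersection of full-rank
sublattices. -/
theorem stmt1 {n s : ℕ} (b cbar : Fin n → (Fin n → ℝ)) (c : Fin s → Fin n → (Fin n → ℝ))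
    (hb : LinearIndependent ℝ b) (hc : ∀ i, LinearIndependent ℝ (c i))
    (hsub : ∀ i, lat (c i) ⊆ lat b)
    (hcbar : LinearIndependent ℝ cbar)
    (hbar : lat cbar = ⋂ i, lat (c i)) :
    (∀ i, latDet (c i) ≤ latDet cbar) ∧
      latDet cbar ≤ latDet b ^ (1 - (s : ℤ)) * ∏ i, latDet (c i) := by
  simp only [latDet_eq_covolume hb, latDet_eq_covolume hcbar, latDet_eq_covolume (hc _)]
  simp only [lat_eq_span_latBasis hb, lat_eq_span_latBasis hcbar,
    lat_eq_span_latBasis (hc _)] at hsub hbar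
  have hbar' : span ℤ (range (latBasis hcbar)) = ⨅ i, span ℤ (range (latBasis (hc i))) :=
    SetLike.coe_injective (by rw [hbar, coe_iInf])
  refine ⟨fun i => ZLattice.covolume_le_covolume_of_le _ _ (hbar'.trans_le (iInf_le _ i)), ?_⟩
  simpa using ZLattice.covolume_iInf_le _ _ _ hbar' hsub
end

section
/- Let Λ₁, …, Λ_s be full-rank sublattices of a full-rank lattice Λ ⊂ ℝⁿ with Λ̄ = ⋂_{i=1}^s Λ_i. If det Λ̄ / det Λ ≥ Σ_{i=1}^s (det Λ̄ / det Λ_i) − s + 2, then Λ ≠ ⋃_{i=1}^s Λ_i. -/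
/-!
In the finite group `Λ / Λ̄`, the images `Λᵢ / Λ̄` have orders `[Λᵢ : Λ̄] = det Λ̄ / det Λᵢ` and
all contain `0`, so if they covered `Λ / Λ̄` it would have at most `1 + Σ ([Λᵢ : Λ̄] - 1)` elements;
the hypothesis says that this is less than `[Λ : Λ̄] = det Λ̄ / det Λ`. The two index formulas are
the comparison of covolumes `ZLattice.covolume_div_covolume_eq_relIndex`.
-/

open MeasureTheory Set Pointwise

open Submodule

theorem AddSubgroup.card_add_card_le_of_iUnion_eq {Q ι : Type*} [AddGroup Q] [Fintype ι]
    {G : AddSubgroup Q} [Finite G] {H : ι → AddSubgroup Q} (hG : ⋃ i, (H i : Set Q) = G) :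
    Nat.card G + Fintype.card ι ≤ 1 + ∑ i, Nat.card (H i) := by
  have (i : ι) : Finite (H i) :=
    Finite.Set.subset (G : Set Q) (hG ▸ subset_iUnion (fun i ↦ (H i : Set Q)) i)
  have hcover : (G : Set Q) ⊆ {0} ∪ ⋃ i, ((H i : Set Q) \ {0}) := by
    intro x hx
    obtain ⟨i, hxi⟩ := mem_iUnion.1 (hG ▸ hx)
    by_cases hx0 : x = 0
    · exact .inl hx0
    · exact .inr (mem_iUnion.2 ⟨i, hxi, hx0⟩)
  have hcard (i : ι) : Nat.card (H i) = ((H i : Set Q) \ {0}).ncard + 1 :=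
    (ncard_sdiff_singleton_add_one (H i).zero_mem (toFinite _)).symm
  have hunion : Nat.card G ≤ 1 + ∑ i, ((H i : Set Q) \ {0}).ncard := calc
    Nat.card G = (G : Set Q).ncard := rfl
    _ ≤ ({0} ∪ ⋃ i, ((H i : Set Q) \ {0})).ncard := ncard_le_ncard hcover (toFinite _)
    _ ≤ ({0} : Set Q).ncard + (⋃ i, ((H i : Set Q) \ {0})).ncard := ncard_union_le _ _
    _ ≤ 1 + ∑ i, ((H i : Set Q) \ {0}).ncard := by
      rw [ncard_singleton]
      exact Nat.add_le_add_left (ncard_iUnion_le_of_fintype _) 1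
  simp only [hcard, Finset.sum_add_distrib, Finset.sum_const, Finset.card_univ, smul_eq_mul,
    mul_one]
  omega

theorem AddSubgroup.relIndex_add_card_le_of_iUnion_eq {A ι : Type*} [AddCommGroup A] [Fintype ι]
    {K G : AddSubgroup A} {H : ι → AddSubgroup A} (hG : ⋃ i, (H i : Set A) = G)
    (hK : K.relIndex G ≠ 0) :
    K.relIndex G + Fintype.card ι ≤ 1 + ∑ i, K.relIndex (H i) := by
  have hcard (L : AddSubgroup A) : K.relIndex L = Nat.card (L.map (QuotientAddGroup.mk' K)) := by
    rw [← AddSubgroup.relIndex_ker, QuotientAddGroup.ker_mk']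
  simp only [hcard] at hK ⊢
  have : Finite (G.map (QuotientAddGroup.mk' K)) := Nat.finite_of_card_ne_zero hK
  apply card_add_card_le_of_iUnion_eq
  simp only [AddSubgroup.coe_map, ← image_iUnion, hG]

theorem LinearIndependent.exists_basis_coe_eq {K ι : Type*} [Field K] [Fintype ι]
    {b : ι → ι → K} (hb : LinearIndependent K b) : ∃ B : Module.Basis ι K (ι → K), ⇑B = b :=
  ⟨basisOfLinearIndependentOfCardEqFinrank' b hb (by simp), by simp⟩

theorem latDet_eq_covolume_s3 {n : ℕ} (B : Module.Basis (Fin n) ℝ (Fin n → ℝ)) :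
    latDet B = ZLattice.covolume (span ℤ (range B)) := by
  rw [ZLattice.covolume_eq_det _ (B.restrictScalars ℤ)]
  congr
  ext
  simp

theorem latDet_pos {n : ℕ} {b : Fin n → Fin n → ℝ} (hb : LinearIndependent ℝ b) :
    0 < latDet b := by
  obtain ⟨B, rfl⟩ := hb.exists_basis_coe_eq
  rw [latDet_eq_covolume_s3]
  exact ZLattice.covolume_pos _ _

theorem relIndex_span_eq_latDet_div {n : ℕ} {u v : Fin n → Fin n → ℝ}
    (hu : LinearIndependent ℝ u) (hv : LinearIndependent ℝ v) (huv : lat u ⊆ lat v) :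
    ((span ℤ (range u)).toAddSubgroup.relIndex (span ℤ (range v)).toAddSubgroup : ℝ) =
      latDet u / latDet v := by
  obtain ⟨U, rfl⟩ := hu.exists_basis_coe_eq
  obtain ⟨V, rfl⟩ := hv.exists_basis_coe_eq
  rw [latDet_eq_covolume_s3, latDet_eq_covolume_s3,
    ZLattice.covolume_div_covolume_eq_relIndex _ _ huv]

/-- if `det Λ̄ / det Λ ≥ Σ det Λ̄ / det Λᵢ − s + 2` then the union of
the sublattices is not all of `Λ`. -/
theorem stmt3 {n s : ℕ} (b cbar : Fin n → (Fin n → ℝ)) (c : Fin s → Fin n → (Fin n → ℝ))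
    (hb : LinearIndependent ℝ b) (hc : ∀ i, LinearIndependent ℝ (c i))
    (hsub : ∀ i, lat (c i) ⊆ lat b)
    (hcbar : LinearIndependent ℝ cbar)
    (hbar : lat cbar = ⋂ i, lat (c i))
    (hidx : (∑ i, latDet cbar / latDet (c i)) - s + 2 ≤ latDet cbar / latDet b) :
    (⋃ i, lat (c i)) ≠ lat b := by
  intro hU
  obtain ⟨i₀, -⟩ : ∃ i, (0 : Fin n → ℝ) ∈ lat (c i) :=
    mem_iUnion.1 (hU ▸ (span ℤ (range b)).zero_mem)
  have hbar_sub (i : Fin s) : lat cbar ⊆ lat (c i) := hbar ▸ iInter_subset _ i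
  have hindex := relIndex_span_eq_latDet_div hcbar hb ((hbar_sub i₀).trans (hsub i₀))
  have hindex_i (i : Fin s) := relIndex_span_eq_latDet_div hcbar (hc i) (hbar_sub i)
  have hcount := AddSubgroup.relIndex_add_card_le_of_iUnion_eq
    (K := (span ℤ (range cbar)).toAddSubgroup) (G := (span ℤ (range b)).toAddSubgroup)
    (H := fun i ↦ (span ℤ (range (c i))).toAddSubgroup) hU
    (Nat.cast_ne_zero.1 (hindex ▸ (div_pos (latDet_pos hcbar) (latDet_pos hb)).ne'))
  rw [Fintype.card_fin] at hcount
  have hcount_real := (Nat.cast_le (α := ℝ)).2 hcount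
  push_cast [hindex, hindex_i] at hcount_real
  linarith
end

section
/- Let K ⊂ ℝⁿ be a compact convex o-symmetric body with nonempty interior, Λ a full-rank lattice, Λ₁ ⊊ Λ a sublattice, and let a ∈ Λ∖Λ₁ realize λ₁(K,Λ∖Λ₁) and b₁,…,bₙ ∈ Λ be linearly independent points with b_j ∈ λ_j(K,Λ)·K. Then for each 2 ≤ i ≤ n, λ_i(K, Λ∖Λ₁) ≤ λ₁(K, Λ∖Λ₁) + λ_i(K, Λ). -/
open MeasureTheory Set Pointwise

lemma aux_smul_subset {n : ℕ} {K : Set (Fin n → ℝ)} (hconv : Convex ℝ K)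
    (h0 : (0 : Fin n → ℝ) ∈ K) {c d : ℝ} (hc : 0 ≤ c) (hcd : c ≤ d) :
    c • K ⊆ d • K := by
  rcases eq_or_lt_of_le (hc.trans hcd) with hd | hd
  · have hc0 : c = 0 := le_antisymm (hcd.trans hd.symm.le) hc
    rw [hc0, ← hd]
  · rintro x ⟨k, hk, rfl⟩
    refine ⟨(c / d) • k, ?_, ?_⟩
    · have := hconv h0 hk (a := 1 - c / d) (b := c / d)
        (by rw [sub_nonneg]; exact div_le_one_of_le₀ hcd hd.le)
        (by positivity) (by ring)
      simpa using this
    · show d • (c / d) • k = c • k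
      rw [smul_smul, mul_div_cancel₀ _ hd.ne']


/-- `λᵢ(K, Λ∖Λ₁) ≤ λ₁(K, Λ∖Λ₁) + λᵢ(K, Λ)` for `2 ≤ i ≤ n`. -/
theorem stmt13 {n : ℕ} (K : Set (Fin n → ℝ)) (hK : IsBody K)
    (b : Fin n → (Fin n → ℝ)) (hb : LinearIndependent ℝ b)
    (L1 : AddSubgroup (Fin n → ℝ)) (hsub : (L1 : Set (Fin n → ℝ)) ⊆ lat b)
    (hne : (L1 : Set (Fin n → ℝ)) ≠ lat b)
    (a : Fin n → ℝ) (ha : a ∈ lat b \ (L1 : Set (Fin n → ℝ)))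
    (haK : a ∈ lambdaRes K (lat b \ (L1 : Set (Fin n → ℝ))) • K)
    (v : Fin n → (Fin n → ℝ)) (hv : LinearIndependent ℝ v)
    (hvlat : ∀ j, v j ∈ lat b)
    (hvK : ∀ j : Fin n, v j ∈ lambdaI ((j : ℕ) + 1) K (lat b) • K)
    (i : ℕ) (h2 : 2 ≤ i) (hin : i ≤ n) :
    lambdaI i K (lat b \ (L1 : Set (Fin n → ℝ))) ≤
      lambdaRes K (lat b \ (L1 : Set (Fin n → ℝ))) + lambdaI i K (lat b) := by
  obtain ⟨hKc, hKconv, hKsym, hKint⟩ := hK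
  set S : Set (Fin n → ℝ) := lat b \ (L1 : Set (Fin n → ℝ)) with hS
  set μ := lambdaRes K S with hμdef
  set lam := lambdaI i K (lat b) with hlamdef
  -- 0 ∈ interior K
  obtain ⟨x0, hx0⟩ := hKint
  have hx0' : -x0 ∈ interior K := by
    have e : -K = (Homeomorph.neg (Fin n → ℝ)) '' K := by
      ext y; simp [Set.mem_neg, Homeomorph.neg]
    have : -x0 ∈ interior (-K) := by
      rw [e, ← (Homeomorph.neg (Fin n → ℝ)).image_interior]
      exact ⟨x0, hx0, rfl⟩
    rwa [← hKsym] at this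
  have h0int : (0 : Fin n → ℝ) ∈ interior K := by
    have := hKconv.interior hx0 hx0' (by norm_num : (0:ℝ) ≤ 1/2)
      (by norm_num : (0:ℝ) ≤ 1/2) (by norm_num)
    simpa using this
  have h0K : (0 : Fin n → ℝ) ∈ K := interior_subset h0int
  -- nonnegativity
  have hμ0 : 0 ≤ μ := Real.sInf_nonneg (fun x hx => hx.1)
  have hlam0 : 0 ≤ lam := Real.sInf_nonneg (fun x hx => hx.1)
  -- absorbency: the set defining lambdaI i K (lat b) is nonempty
  have habs : Absorbent ℝ K := absorbent_nhds_zero (mem_interior_iff_mem_nhds.mp h0int)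
  have hrj : ∀ j : Fin n, ∃ r : ℝ, 0 < r ∧ ∀ c : ℝ, r ≤ ‖c‖ → v j ∈ c • K := by
    intro j
    obtain ⟨r, hr, h⟩ := (absorbent_iff_forall_absorbs_singleton.1 habs (v j)).exists_pos
    exact ⟨r, hr, fun c hc => (h c hc) rfl⟩
  choose r hr0 hrabs using hrj
  set R : ℝ := 1 + ∑ j : Fin n, r j with hRdef
  have hRpos : 0 < R := by
    have : 0 ≤ ∑ j : Fin n, r j := Finset.sum_nonneg (fun j _ => (hr0 j).le)
    linarith
  have hvR : ∀ j : Fin n, v j ∈ R • K := by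
    intro j
    refine hrabs j R ?_
    rw [Real.norm_eq_abs, abs_of_pos hRpos, hRdef]
    have h1 : r j ≤ ∑ k : Fin n, r k :=
      Finset.single_le_sum (fun k _ => (hr0 k).le) (Finset.mem_univ j)
    linarith
  have hTne : ∃ l : ℝ, 0 ≤ l ∧ i ≤ Module.finrank ℝ (Submodule.span ℝ (l • K ∩ lat b)) := by
    refine ⟨R, hRpos.le, ?_⟩
    have hsub' : Set.range v ⊆ R • K ∩ lat b := by
      rintro x ⟨j, rfl⟩; exact ⟨hvR j, hvlat j⟩
    have h1 : Submodule.span ℝ (Set.range v) ≤ Submodule.span ℝ (R • K ∩ lat b) :=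
      Submodule.span_mono hsub'
    have h2' : Module.finrank ℝ (Submodule.span ℝ (Set.range v)) = n := by
      rw [finrank_span_eq_card hv, Fintype.card_fin]
    calc i ≤ n := hin
      _ = _ := h2'.symm
      _ ≤ _ := Submodule.finrank_mono h1
  -- monotonicity: lambdaI (j+1) ≤ lam for j+1 ≤ i
  have hmono : ∀ j : Fin n, (j : ℕ) + 1 ≤ i → lambdaI ((j : ℕ) + 1) K (lat b) ≤ lam := by
    intro j hj
    refine csInf_le_csInf ⟨0, fun x hx => hx.1⟩ hTne ?_
    rintro l ⟨hl0, hl⟩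
    exact ⟨hl0, le_trans hj hl⟩
  -- each v j with j < i lies in lam • K
  have hvlam : ∀ j : Fin n, (j : ℕ) + 1 ≤ i → v j ∈ lam • K := by
    intro j hj
    have h0 : 0 ≤ lambdaI ((j : ℕ) + 1) K (lat b) := Real.sInf_nonneg (fun x hx => hx.1)
    exact aux_smul_subset hKconv h0K h0 (hmono j hj) (hvK j)
  -- a and the modified points lie in (μ + lam) • K ∩ S
  have hsum : (μ + lam) • K = μ • K + lam • K := hKconv.add_smul hμ0 hlam0
  have haP : a ∈ (μ + lam) • K ∩ S := by
    constructor
    · exact aux_smul_subset hKconv h0K hμ0 (le_add_of_nonneg_right hlam0) haK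
    · exact ha
  have hwP : ∀ j : Fin n, (j : ℕ) + 1 ≤ i →
      v j ∈ (μ + lam) • K ∩ S ∨ a + v j ∈ (μ + lam) • K ∩ S := by
    intro j hj
    by_cases hL : v j ∈ (L1 : Set (Fin n → ℝ))
    · right
      constructor
      · rw [hsum]; exact Set.add_mem_add haK (hvlam j hj)
      · constructor
        · have ha' : a ∈ (Submodule.span ℤ (Set.range b) : Submodule ℤ (Fin n → ℝ)) := ha.1
          have hv' : v j ∈ (Submodule.span ℤ (Set.range b) : Submodule ℤ (Fin n → ℝ)) := hvlat j
          exact Submodule.add_mem _ ha' hv'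
        · intro hc
          have : a ∈ (L1 : Set (Fin n → ℝ)) := by
            have := L1.sub_mem hc hL
            simpa using this
          exact ha.2 this
    · left
      refine ⟨aux_smul_subset hKconv h0K hlam0 (le_add_of_nonneg_left hμ0) (hvlam j hj),
        hvlat j, hL⟩
  -- the span of (μ + lam) • K ∩ S contains all v j for j < i
  set P := Submodule.span ℝ ((μ + lam) • K ∩ S) with hP
  have hvP : ∀ j : Fin n, (j : ℕ) + 1 ≤ i → v j ∈ P := by
    intro j hj
    have haP' : a ∈ P := Submodule.subset_span haP
    rcases hwP j hj with h | h
    · exact Submodule.subset_span h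
    · have : a + v j ∈ P := Submodule.subset_span h
      simpa using P.sub_mem this haP'
  -- hence finrank P ≥ i
  have hfin : i ≤ Module.finrank ℝ P := by
    set u : Fin i → (Fin n → ℝ) := fun j => v (Fin.castLE hin j) with hu
    have hui : LinearIndependent ℝ u :=
      hv.comp (Fin.castLE hin) (Fin.castLE_injective hin)
    have hrange : Set.range u ⊆ (P : Set (Fin n → ℝ)) := by
      rintro x ⟨j, rfl⟩
      exact hvP (Fin.castLE hin j) j.isLt
    have h1 : Submodule.span ℝ (Set.range u) ≤ P := Submodule.span_le.2 hrange
    have h2' : Module.finrank ℝ (Submodule.span ℝ (Set.range u)) = i := by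
      rw [finrank_span_eq_card hui, Fintype.card_fin]
    calc i = _ := h2'.symm
      _ ≤ _ := Submodule.finrank_mono h1
  -- conclude
  exact csInf_le ⟨0, fun x hx => hx.1⟩ ⟨by positivity, hfin⟩
end

section
/- Let K ⊂ ℝⁿ be a compact convex o-symmetric body with nonempty interior and Λ a full-rank lattice. Then the number of points of Λ in K is at most (2/λ₁(K,Λ) + 1)ⁿ, where λ₁(K,Λ) is the first successive minimum. -/
open MeasureTheory Set Pointwise

/-! Let `m = ⌊2/λ₁⌋ + 1`, so that `2/m < λ₁`. Reducing the integer coordinates of lattice points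
modulo `m` is injective on `K ∩ Λ`: if `x ≡ y` modulo `mΛ`, then `(x - y)/m = (2/m) • (x - y)/2` is a
lattice point of `(2/m)K` by convexity and symmetry, hence `0`. So `#(K ∩ Λ) ≤ mⁿ ≤ (2/λ₁ + 1)ⁿ`.
Discreteness of `Λ` and boundedness of `K` give `λ₁ > 0` as soon as `K ∩ Λ ⊄ {0}`; otherwise the
bound is trivial. -/

lemma Convex.inv_two_smul_sub_mem {E : Type*} [AddCommGroup E] [Module ℝ E] {K : Set E}
    (hconv : Convex ℝ K) (hsymm : K = -K) {x y : E} (hx : x ∈ K) (hy : y ∈ K) :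
    (2 : ℝ)⁻¹ • (x - y) ∈ K := by
  have hy' : -y ∈ K := by rw [hsymm]; exact neg_mem_neg.mpr hy
  convert hconv hx hy' (by norm_num : (0 : ℝ) ≤ 2⁻¹) (by norm_num : (0 : ℝ) ≤ 2⁻¹) (by norm_num)
    using 1
  rw [sub_eq_add_neg, smul_add, smul_neg]

lemma Module.Basis.exists_eq_smul_of_forall_dvd_repr {ι M : Type*} [Fintype ι] [AddCommGroup M]
    (b : Module.Basis ι ℤ M) {v : M} {m : ℤ} (h : ∀ i, m ∣ b.repr v i) : ∃ z, v = m • z := by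
  choose c hc using h
  refine ⟨∑ i, c i • b i, ?_⟩
  conv_lhs => rw [← b.sum_repr v]
  simp only [hc, Finset.smul_sum, mul_smul]

lemma ncard_inter_le_pow_of_forall_mem_smul_eq_zero {ι E : Type*} [Fintype ι] [AddCommGroup E]
    [Module ℝ E] {L : Submodule ℤ E} (bL : Module.Basis ι ℤ L) {K : Set E} (hconv : Convex ℝ K)
    (hsymm : K = -K) {m : ℕ} (hm : 0 < m) (hK : ∀ z ∈ L, z ∈ ((2 : ℝ) / m) • K → z = 0) :
    (K ∩ L).ncard ≤ m ^ Fintype.card ι := by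
  have : NeZero m := ⟨hm.ne'⟩
  let f : (K ∩ L : Set E) → ι → ZMod m := fun x i => (bL.repr ⟨x, x.2.2⟩ i : ZMod m)
  have hf : Function.Injective f := by
    rintro ⟨x, hxK, hxL⟩ ⟨y, hyK, hyL⟩ hxy
    have hdvd : ∀ i, (m : ℤ) ∣ bL.repr (⟨x, hxL⟩ - ⟨y, hyL⟩) i := fun i => by
      rw [map_sub, Finsupp.sub_apply]
      exact (ZMod.intCast_eq_intCast_iff_dvd_sub _ _ _).1 (congrFun hxy i).symm
    obtain ⟨z, hz⟩ := bL.exists_eq_smul_of_forall_dvd_repr hdvd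
    have hxy : x - y = (m : ℝ) • (z : E) := by
      rw [← Int.cast_natCast, Int.cast_smul_eq_zsmul, ← Submodule.coe_smul, ← hz]; rfl
    have hzK : (z : E) ∈ ((2 : ℝ) / m) • K := by
      refine ⟨(2 : ℝ)⁻¹ • (x - y), hconv.inv_two_smul_sub_mem hsymm hxK hyK, ?_⟩
      have hm' : (m : ℝ) ≠ 0 := Nat.cast_ne_zero.2 hm.ne'
      change ((2 : ℝ) / m) • (2 : ℝ)⁻¹ • (x - y) = z
      rw [hxy, smul_smul, smul_smul, show (2 : ℝ) / m * 2⁻¹ * m = 1 by field_simp, one_smul]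
    have := hK z z.2 hzK
    rw [this, smul_zero, sub_eq_zero] at hxy
    exact Subtype.ext hxy
  rw [← Nat.card_coe_set_eq]
  calc Nat.card (K ∩ L : Set E) ≤ Nat.card (ι → ZMod m) := Nat.card_le_card_of_injective f hf
    _ = m ^ Fintype.card ι := by simp [Nat.card_fun]

lemma AddSubgroup.exists_pos_forall_le_norm {E : Type*} [NormedAddCommGroup E] (L : AddSubgroup E)
    [DiscreteTopology L] : ∃ ε > 0, ∀ x ∈ L, x ≠ 0 → ε ≤ ‖x‖ := by
  obtain ⟨ε, hε, h⟩ := Metric.isOpen_singleton_iff.1 (isOpen_discrete {(0 : L)})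
  refine ⟨ε, hε, fun x hx hx0 => le_of_not_gt fun hlt => hx0 ?_⟩
  simpa using congrArg Subtype.val (h ⟨x, hx⟩ (by simpa [Subtype.dist_eq] using hlt))

lemma exists_pos_forall_le_norm_of_mem_lat {n : ℕ} {b : Fin n → Fin n → ℝ}
    (hb : LinearIndependent ℝ b) : ∃ ε > 0, ∀ x ∈ lat b, x ≠ 0 → ε ≤ ‖x‖ := by
  let B := Module.Basis.mk hb (hb.span_eq_top_of_card_eq_finrank' (by simp)).ge
  simpa [B, lat] using (Submodule.span ℤ (range B)).toAddSubgroup.exists_pos_forall_le_norm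

section lambda1

variable {n : ℕ} {K S : Set (Fin n → ℝ)}

lemma lambda1_nonneg : 0 ≤ lambda1 K S := Real.sInf_nonneg fun _ h => h.1

lemma lambda1_le {l : ℝ} {x : Fin n → ℝ} (hl : 0 ≤ l) (hxS : x ∈ S) (hx0 : x ≠ 0)
    (hxK : x ∈ l • K) : lambda1 K S ≤ l :=
  csInf_le ⟨0, fun _ h => h.1⟩ ⟨hl, x, hxS, hx0, hxK⟩

lemma lambda1_pos (hK : Bornology.IsBounded K) (hS : ∃ ε > 0, ∀ x ∈ S, x ≠ 0 → ε ≤ ‖x‖)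
    {x : Fin n → ℝ} (hxS : x ∈ S) (hx0 : x ≠ 0) (hxK : x ∈ K) : 0 < lambda1 K S := by
  obtain ⟨ε, hε, hεS⟩ := hS
  obtain ⟨R, hR, hRK⟩ := hK.exists_pos_norm_le
  refine (div_pos hε hR).trans_le (le_csInf ⟨1, zero_le_one, x, hxS, hx0, by rwa [one_smul]⟩ ?_)
  rintro l ⟨hl, _, hyS, hy0, z, hzK, rfl⟩
  rw [div_le_iff₀ hR]
  calc ε ≤ ‖l • z‖ := hεS _ hyS hy0
    _ = l * ‖z‖ := by rw [norm_smul, Real.norm_of_nonneg hl]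
    _ ≤ l * R := mul_le_mul_of_nonneg_left (hRK z hzK) hl

end lambda1

/-- Betke–Henk–Wills: `#(K ∩ Λ) ≤ (2/λ₁(K,Λ) + 1)ⁿ`. -/
theorem stmt15 {n : ℕ} (K : Set (Fin n → ℝ)) (hK : IsBody K)
    (b : Fin n → (Fin n → ℝ)) (hb : LinearIndependent ℝ b) :
    ((K ∩ lat b).ncard : ℝ) ≤ (2 / lambda1 K (lat b) + 1) ^ n := by
  obtain ⟨hcomp, hconv, hsymm, -⟩ := hK
  have hlam : 0 ≤ lambda1 K (lat b) := lambda1_nonneg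
  by_cases htriv : K ∩ lat b ⊆ {0}
  · calc ((K ∩ lat b).ncard : ℝ) ≤ 1 := by
          exact_mod_cast (ncard_le_ncard htriv).trans (ncard_singleton 0).le
      _ ≤ _ := one_le_pow₀ (le_add_of_nonneg_left (div_nonneg zero_le_two hlam))
  obtain ⟨x, ⟨hxK, hxL⟩, hx0⟩ := not_subset.1 htriv
  have hpos := lambda1_pos hcomp.isBounded (exists_pos_forall_le_norm_of_mem_lat hb) hxL hx0 hxK
  set m := ⌊2 / lambda1 K (lat b)⌋₊ + 1
  have hm : ∀ z ∈ lat b, z ∈ ((2 : ℝ) / m) • K → z = 0 := fun z hzL hzK => by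
    by_contra hz0
    refine (lambda1_le (by positivity) hzL hz0 hzK).not_gt ?_
    rw [div_lt_comm₀ (by positivity) hpos]
    exact_mod_cast Nat.lt_floor_add_one _
  have hcount := ncard_inter_le_pow_of_forall_mem_smul_eq_zero
    (Module.Basis.span (hb.restrict_scalars' ℤ)) hconv hsymm (Nat.succ_pos _) hm
  rw [Fintype.card_fin] at hcount
  calc ((K ∩ lat b).ncard : ℝ) ≤ (m : ℝ) ^ n := by exact_mod_cast hcount
    _ ≤ _ := pow_le_pow_left₀ (by positivity)
      (by push_cast [m]; linarith [Nat.floor_le (by positivity : 0 ≤ 2 / lambda1 K (lat b))]) n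
end

section
/- Example in ℝ²: let K = [−1,1]×[−α,α] with 0 < α ≤ 2/p for a prime p > 2, Λ = ℤ², Λ₁ = {z ∈ ℤ² : z₂ ≡ 0 mod 2}, Λ₂ = {z ∈ ℤ² : z₁ ≡ 0 mod p}. Then Λ̄ = Λ₁ ∩ Λ₂ = {z ∈ ℤ² : z₂ ≡ 0 mod 2, z₁ ≡ 0 mod p} has det Λ̄ = 2p, λ₁(K,Λ̄) = p, and λ₁(K, Λ∖(Λ₁∪Λ₂)) = 1/α. -/
/-! A nonzero point `(pa, 2c)` of `Λ̄ = pℤ × 2ℤ` has `|pa| ≥ p` or `|2c| ≥ 2`, so it lies in `λK`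
only if `λ ≥ p` or `λα ≥ 2`; both are attained on the axes, whence `λ₁(K, Λ̄) = min (p, 2/α) = p`
as `pα ≤ 2`. A point of `Λ ∖ (Λ₁ ∪ Λ₂)` has an odd second coordinate and a first coordinate
not divisible by `p`, so both are nonzero integers; as `(1, 1)` is such a point, the restricted
minimum is `max (1, 1/α) = 1/α`. -/

open MeasureTheory Set Pointwise

lemma one_le_abs_intCast {m : ℤ} (hm : m ≠ 0) : (1 : ℝ) ≤ |(m : ℝ)| := by
  rw [← Int.cast_abs]
  exact_mod_cast Int.one_le_abs hm

lemma le_abs_mul_intCast {t : ℝ} (ht : 0 ≤ t) {m : ℤ} (hm : m ≠ 0) : t ≤ |t * m| := by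
  rw [abs_mul, abs_of_nonneg ht]
  exact le_mul_of_one_le_right ht (one_le_abs_intCast hm)

lemma one_ne_natCast_mul_intCast {n : ℕ} (hn : 1 < n) (a : ℤ) : (1 : ℝ) ≠ n * a := by
  intro h
  have hdvd : (n : ℤ) ∣ 1 := ⟨a, by exact_mod_cast h⟩
  have := Int.le_of_dvd one_pos hdvd
  omega

section Rectangle

variable {β α l : ℝ} {x : Fin 2 → ℝ}

lemma abs_le_of_mem_smul_rect (hx : x ∈ l • {y : Fin 2 → ℝ | |y 0| ≤ β ∧ |y 1| ≤ α}) :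
    |x 0| ≤ |l| * β ∧ |x 1| ≤ |l| * α := by
  obtain ⟨y, ⟨hy0, hy1⟩, rfl⟩ := hx
  simp only [Pi.smul_apply, smul_eq_mul, abs_mul]
  exact ⟨mul_le_mul_of_nonneg_left hy0 (abs_nonneg l),
    mul_le_mul_of_nonneg_left hy1 (abs_nonneg l)⟩

lemma mem_smul_rect_of_abs_le (hl : 0 < l) (h0 : |x 0| ≤ l * β) (h1 : |x 1| ≤ l * α) :
    x ∈ l • {y : Fin 2 → ℝ | |y 0| ≤ β ∧ |y 1| ≤ α} := by
  rw [mem_smul_set_iff_inv_smul_mem₀ hl.ne']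
  simp only [mem_ofPred_eq, Pi.smul_apply, smul_eq_mul, abs_mul, abs_inv, abs_of_pos hl,
    inv_mul_le_iff₀ hl]
  exact ⟨h0, h1⟩

lemma lambda1_rect_rectLattice {p q : ℝ} (hβ : 0 < β) (hα : 0 < α) (hp : 0 < p) (hq : 0 < q) :
    lambda1 {y : Fin 2 → ℝ | |y 0| ≤ β ∧ |y 1| ≤ α}
      {x | (∃ a : ℤ, x 0 = p * a) ∧ ∃ c : ℤ, x 1 = q * c} = min (p / β) (q / α) := by
  refine IsLeast.csInf_eq ⟨⟨by positivity, ?_⟩, ?_⟩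
  · rcases le_total (p / β) (q / α) with h | h
    · refine ⟨![p, 0], ⟨⟨1, by simp⟩, 0, by simp⟩, by simp [hp.ne'], ?_⟩
      rw [min_eq_left h]
      apply mem_smul_rect_of_abs_le (by positivity)
      · simp [abs_of_pos hp, div_mul_cancel₀ p hβ.ne']
      · simp; positivity
    · refine ⟨![0, q], ⟨⟨0, by simp⟩, 1, by simp⟩, by simp [hq.ne'], ?_⟩
      rw [min_eq_right h]
      apply mem_smul_rect_of_abs_le (by positivity)
      · simp; positivity
      · simp [abs_of_pos hq, div_mul_cancel₀ q hα.ne']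
  · rintro l ⟨hl, x, ⟨⟨a, ha⟩, c, hc⟩, hx0, hxK⟩
    obtain ⟨h0, h1⟩ := abs_le_of_mem_smul_rect hxK
    rw [abs_of_nonneg hl] at h0 h1
    by_cases haz : a = 0
    · have hcz : c ≠ 0 := by
        rintro rfl
        exact hx0 (funext fun i => by fin_cases i <;> simp [ha, hc, haz])
      exact min_le_of_right_le
        ((div_le_iff₀ hα).mpr ((le_abs_mul_intCast hq.le hcz).trans (hc ▸ h1)))
    · exact min_le_of_left_le
        ((div_le_iff₀ hβ).mpr ((le_abs_mul_intCast hp.le haz).trans (ha ▸ h0)))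

lemma lambdaRes_rect_of_off_axes {S : Set (Fin 2 → ℝ)} (hβ : 0 < β) (hα : 0 < α)
    (hS : ∀ x ∈ S, 1 ≤ |x 0| ∧ 1 ≤ |x 1|) (h11 : ![1, 1] ∈ S) :
    lambdaRes {y : Fin 2 → ℝ | |y 0| ≤ β ∧ |y 1| ≤ α} S = max (1 / β) (1 / α) := by
  refine IsLeast.csInf_eq ⟨⟨by positivity, ![1, 1], ?_, h11⟩, ?_⟩
  · apply mem_smul_rect_of_abs_le (by positivity)
    · simp [← div_le_iff₀ hβ]
    · simp [← div_le_iff₀ hα]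
  · rintro l ⟨hl, x, hxK, hxS⟩
    obtain ⟨h0, h1⟩ := abs_le_of_mem_smul_rect hxK
    obtain ⟨hx0, hx1⟩ := hS x hxS
    rw [abs_of_nonneg hl] at h0 h1
    exact max_le ((div_le_iff₀ hβ).mpr (hx0.trans h0)) ((div_le_iff₀ hα).mpr (hx1.trans h1))

end Rectangle

section DiagonalBasis

variable (p q : ℝ)

lemma lat_diagonal :
    lat ![![p, 0], ![0, q]] = {x | (∃ a : ℤ, x 0 = p * a) ∧ ∃ c : ℤ, x 1 = q * c} := by
  ext x
  simp only [lat, SetLike.mem_coe, Submodule.mem_span_range_iff_exists_fun, Fin.sum_univ_two,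
    mem_ofPred_eq]
  constructor
  · rintro ⟨f, rfl⟩
    exact ⟨⟨f 0, by simp [mul_comm]⟩, f 1, by simp [mul_comm]⟩
  · rintro ⟨⟨a, ha⟩, c, hc⟩
    exact ⟨![a, c], funext fun i => by fin_cases i <;> simp [ha, hc, mul_comm]⟩

lemma latDet_diagonal : latDet ![![p, 0], ![0, q]] = |p * q| := by
  simp [latDet, Matrix.det_fin_two]

variable {p q}

lemma linearIndependent_diagonal (hp : p ≠ 0) (hq : q ≠ 0) :
    LinearIndependent ℝ ![![p, 0], ![0, q]] := by
  rw [linearIndependent_fin2]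
  refine ⟨fun h => hq (by simpa using congrFun h 1), fun a h => hp ?_⟩
  simpa [eq_comm] using congrFun h 0

end DiagonalBasis

section IntegerPoints

variable {L : Set (Fin 2 → ℝ)} (p : ℕ)

lemma sep_inter_sep_eq_rectLattice
    (hL : L = {x | (∃ a : ℤ, x 0 = (a : ℝ)) ∧ (∃ c : ℤ, x 1 = (c : ℝ))}) :
    {x ∈ L | ∃ c : ℤ, x 1 = 2 * (c : ℝ)} ∩ {x ∈ L | ∃ a : ℤ, x 0 = (p : ℝ) * (a : ℝ)}
      = {x | (∃ a : ℤ, x 0 = p * (a : ℝ)) ∧ ∃ c : ℤ, x 1 = 2 * (c : ℝ)} := by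
  ext x
  constructor
  · rintro ⟨⟨_, hc⟩, _, ha⟩
    exact ⟨ha, hc⟩
  · rintro ⟨⟨a, ha⟩, c, hc⟩
    have hxL : x ∈ L := hL ▸ ⟨⟨p * a, by simp [ha]⟩, 2 * c, by simp [hc]⟩
    exact ⟨⟨hxL, c, hc⟩, hxL, a, ha⟩

lemma one_le_abs_of_mem_diff_sep_union_sep
    (hL : L = {x | (∃ a : ℤ, x 0 = (a : ℝ)) ∧ (∃ c : ℤ, x 1 = (c : ℝ))}) :
    ∀ x ∈ L \ ({x ∈ L | ∃ c : ℤ, x 1 = 2 * (c : ℝ)} ∪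
      {x ∈ L | ∃ a : ℤ, x 0 = (p : ℝ) * (a : ℝ)}), 1 ≤ |x 0| ∧ 1 ≤ |x 1| := by
  rintro x ⟨hxL, hx⟩
  obtain ⟨⟨a, ha⟩, c, hc⟩ := hL ▸ hxL
  simp only [mem_union, mem_ofPred_eq, not_or] at hx
  refine ⟨ha ▸ one_le_abs_intCast ?_, hc ▸ one_le_abs_intCast ?_⟩
  · rintro rfl
    exact hx.2 ⟨hxL, 0, by simp [ha]⟩
  · rintro rfl
    exact hx.1 ⟨hxL, 0, by simp [hc]⟩

variable {p}

lemma one_one_mem_diff_sep_union_sep (hp : 1 < p)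
    (hL : L = {x | (∃ a : ℤ, x 0 = (a : ℝ)) ∧ (∃ c : ℤ, x 1 = (c : ℝ))}) :
    ![1, 1] ∈ L \ ({x ∈ L | ∃ c : ℤ, x 1 = 2 * (c : ℝ)} ∪
      {x ∈ L | ∃ a : ℤ, x 0 = (p : ℝ) * (a : ℝ)}) := by
  refine ⟨hL ▸ ⟨⟨1, by simp⟩, 1, by simp⟩, ?_⟩
  rintro (⟨_, c, hc⟩ | ⟨_, a, ha⟩)
  · exact one_ne_natCast_mul_intCast (n := 2) one_lt_two c (by simpa using hc)
  · exact one_ne_natCast_mul_intCast hp a (by simpa using ha)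

end IntegerPoints

theorem stmt18_general (p : ℕ) (hp2 : 2 < p)
    (α : ℝ) (hα : 0 < α) (hαp : α ≤ 2 / p)
    (K : Set (Fin 2 → ℝ)) (hK : K = {x | |x 0| ≤ 1 ∧ |x 1| ≤ α})
    (L L1 L2 : Set (Fin 2 → ℝ))
    (hL : L = {x | (∃ a : ℤ, x 0 = (a : ℝ)) ∧ (∃ c : ℤ, x 1 = (c : ℝ))})
    (hL1 : L1 = {x ∈ L | ∃ c : ℤ, x 1 = 2 * (c : ℝ)})
    (hL2 : L2 = {x ∈ L | ∃ a : ℤ, x 0 = (p : ℝ) * (a : ℝ)}) :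
    (L1 ∩ L2 = {x ∈ L | (∃ c : ℤ, x 1 = 2 * (c : ℝ)) ∧ ∃ a : ℤ, x 0 = (p : ℝ) * (a : ℝ)}) ∧
      (∃ c : Fin 2 → (Fin 2 → ℝ), LinearIndependent ℝ c ∧ lat c = L1 ∩ L2 ∧
        latDet c = 2 * p) ∧
      lambda1 K (L1 ∩ L2) = p ∧
      lambdaRes K (L \ (L1 ∪ L2)) = 1 / α := by
  have hp0 : (0 : ℝ) < p := by exact_mod_cast (by omega : 0 < p)
  have hpα : p * α ≤ 2 := (le_div_iff₀' hp0).mp hαp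
  have hα1 : α ≤ 1 := hαp.trans ((div_le_one hp0).mpr (by exact_mod_cast hp2.le))
  subst hK hL1 hL2
  have hinter := sep_inter_sep_eq_rectLattice p hL
  refine ⟨by ext; simp only [mem_inter_iff, mem_ofPred_eq]; tauto,
    ⟨![![p, 0], ![0, 2]], linearIndependent_diagonal hp0.ne' two_ne_zero,
      (lat_diagonal _ _).trans hinter.symm, ?_⟩, ?_, ?_⟩
  · rw [latDet_diagonal, abs_of_pos (by positivity), mul_comm]
  · rw [hinter, lambda1_rect_rectLattice one_pos hα hp0 two_pos, div_one,
      min_eq_left ((le_div_iff₀ hα).mpr hpα)]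
  · rw [lambdaRes_rect_of_off_axes one_pos hα (one_le_abs_of_mem_diff_sep_union_sep p hL)
      (one_one_mem_diff_sep_union_sep (by omega) hL), div_one,
      max_eq_right (one_le_one_div hα hα1)]

/-- the planar example of the paper. -/
theorem stmt18 (p : ℕ) (hp : p.Prime) (hp2 : 2 < p)
    (α : ℝ) (hα : 0 < α) (hαp : α ≤ 2 / p)
    (K : Set (Fin 2 → ℝ)) (hK : K = {x | |x 0| ≤ 1 ∧ |x 1| ≤ α})
    (L L1 L2 : Set (Fin 2 → ℝ))
    (hL : L = {x | (∃ a : ℤ, x 0 = (a : ℝ)) ∧ (∃ c : ℤ, x 1 = (c : ℝ))})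
    (hL1 : L1 = {x ∈ L | ∃ c : ℤ, x 1 = 2 * (c : ℝ)})
    (hL2 : L2 = {x ∈ L | ∃ a : ℤ, x 0 = (p : ℝ) * (a : ℝ)}) :
    (L1 ∩ L2 = {x ∈ L | (∃ c : ℤ, x 1 = 2 * (c : ℝ)) ∧ ∃ a : ℤ, x 0 = (p : ℝ) * (a : ℝ)}) ∧
      (∃ c : Fin 2 → (Fin 2 → ℝ), LinearIndependent ℝ c ∧ lat c = L1 ∩ L2 ∧
        latDet c = 2 * p) ∧
      lambda1 K (L1 ∩ L2) = p ∧
      lambdaRes K (L \ (L1 ∪ L2)) = 1 / α :=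
  stmt18_general p hp2 α hα hαp K hK L L1 L2 hL hL1 hL2
end
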